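/- Let T be an HC tree of order n that is locally optimal with respect to the interchange operation, for a similarity function w : {1,…,n}×{1,…,n} → ℝ≥0, and let s(T) = Σ_{i<j} w(i,j). Then 2·rev(T) + 2·s(T) ≥ cost(T). -/
import Mathlib


/-- A (rooted, full) binary tree with leaves labeled by elements of `α`. -/
inductive HCTree (α : Type) : Type
  | leaf : α → HCTree α
  | node : HCTree α → HCTree α → HCTree α
  deriving DecidableEq

namespace HCTree

variable {α : Type} [DecidableEq α]

/-- The set of leaf labels of a tree. -/
def leaves : HCTree α → Finset α
  | leaf a => {a}
  | node l r => leaves l ∪ leaves r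

/-- The tree is a valid HC tree: all leaf labels are pairwise distinct. -/
def Proper : HCTree α → Prop
  | leaf _ => True
  | node l r => Proper l ∧ Proper r ∧ Disjoint (leaves l) (leaves r)

/-- The number of leaves of the subtree rooted at the lowest common ancestor
of the leaves `i` and `j` (i.e. `|T_{i,j}|`). -/
def lcaSize : HCTree α → α → α → ℕ
  | leaf _, _, _ => 1
  | node l r, i, j =>
      if i ∈ leaves l ∧ j ∈ leaves l then lcaSize l i j
      else if i ∈ leaves r ∧ j ∈ leaves r then lcaSize r i j
      else (leaves l ∪ leaves r).card

/-- `Σ_{i<j, i,j ∈ L} w i j`. -/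
noncomputable def pairsSum [LinearOrder α] (w : α → α → ℝ) (L : Finset α) : ℝ :=
  ∑ i ∈ L, ∑ j ∈ L, if i < j then w i j else 0

/-- Moseley–Wang revenue of `T` with respect to its own leaf set:
`rev(T) = Σ_{i<j} w(i,j) (|L| - |T_{i,j}|)`. -/
noncomputable def rev [LinearOrder α] (w : α → α → ℝ) (T : HCTree α) : ℝ :=
  ∑ i ∈ T.leaves, ∑ j ∈ T.leaves,
    if i < j then w i j * ((T.leaves.card : ℝ) - (T.lcaSize i j : ℝ)) else 0

/-- Dasgupta cost: `cost(T) = Σ_{i<j} w(i,j) |T_{i,j}|`. -/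
noncomputable def cost [LinearOrder α] (w : α → α → ℝ) (T : HCTree α) : ℝ :=
  ∑ i ∈ T.leaves, ∑ j ∈ T.leaves,
    if i < j then w i j * (T.lcaSize i j : ℝ) else 0

/-- `w(A,B) = Σ_{i∈A, j∈B} w(i,j)`. -/
noncomputable def wSet (w : α → α → ℝ) (A B : Finset α) : ℝ := ∑ i ∈ A, ∑ j ∈ B, w i j

/-- One-hole contexts for `HCTree`. -/
inductive Ctx (α : Type) : Type
  | hole : Ctx α
  | nodeL : Ctx α → HCTree α → Ctx α
  | nodeR : HCTree α → Ctx α → Ctx α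

/-- Filling the hole of a context with a tree. -/
def Ctx.fill {α : Type} : Ctx α → HCTree α → HCTree α
  | Ctx.hole, T => T
  | Ctx.nodeL K r, T => node (Ctx.fill K T) r
  | Ctx.nodeR l K, T => node l (Ctx.fill K T)

/-- Equality of HC trees as *unordered* trees (children of a node are unordered). -/
inductive TEq : HCTree α → HCTree α → Prop
  | leaf (a : α) : TEq (leaf a) (leaf a)
  | node {l r l' r' : HCTree α} : TEq l l' → TEq r r' → TEq (node l r) (node l' r')
  | swap {l r l' r' : HCTree α} : TEq l r' → TEq r l' → TEq (node l r) (node l' r')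

/-- `T'` is obtained from `T` by a single interchange operation: at an edge `(x,y)`
where `x` is internal with parent `y`, the subtrees rooted at the children of `x`
have leaf sets `A` and `B`, and the other child of `y` has leaf set `C`; the
operation swaps the `B`-subtree with the `C`-subtree, or the `A`-subtree with
the `C`-subtree. -/
def Interchange {α : Type} (T T' : HCTree α) : Prop :=
  ∃ (K : Ctx α) (A B C : HCTree α),
    T = K.fill (node (node A B) C) ∧
    (T' = K.fill (node (node A C) B) ∨ T' = K.fill (node (node C B) A))

/-- `T` is locally optimal: no interchange, performed on any presentation `S` of
`T` as an unordered tree, strictly increases the revenue. -/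
def LocalOpt [LinearOrder α] (w : α → α → ℝ) (T : HCTree α) : Prop :=
  ∀ S S' : HCTree α, TEq T S → Interchange S S' → rev w S' ≤ rev w T

/-- One step of local search: an interchange, up to unordered-tree equality. -/
def IStep (T T' : HCTree α) : Prop :=
  ∃ S S' : HCTree α, TEq T S ∧ Interchange S S' ∧ TEq S' T'

/-- The interchange distance: minimum number of interchange operations needed to
convert `T₁` into `T₂` (as unordered trees). -/
noncomputable def idist (T₁ T₂ : HCTree α) : ℕ :=
  sInf {k : ℕ | ∃ f : ℕ → HCTree α, f 0 = T₁ ∧ TEq (f k) T₂ ∧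
    ∀ i < k, IStep (f i) (f (i + 1))}

/-- The total cost of all merges of `T`: the sum over internal nodes, with
children leaf sets `A`, `B`, of `(|A|+|B|)·w(A,B)`. -/
noncomputable def mergeCostSum (w : α → α → ℝ) : HCTree α → ℝ
  | leaf _ => 0
  | node l r => mergeCostSum w l + mergeCostSum w r
      + ((l.leaves.card : ℝ) + (r.leaves.card : ℝ)) * wSet w l.leaves r.leaves

/-- The total revenue of all merges of `T` in a tree of order `n`: the sum over
internal nodes, with children leaf sets `A`, `B`, of `(n-|A|-|B|)·w(A,B)`. -/
noncomputable def mergeRevSum (w : α → α → ℝ) (n : ℕ) : HCTree α → ℝ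
  | leaf _ => 0
  | node l r => mergeRevSum w n l + mergeRevSum w n r
      + ((n : ℝ) - (l.leaves.card : ℝ) - (r.leaves.card : ℝ)) * wSet w l.leaves r.leaves

/-- Average similarity between two clusters. -/
noncomputable def sim (w : α → α → ℝ) (A B : Finset α) : ℝ :=
  wSet w A B / ((A.card : ℝ) * (B.card : ℝ))

/-- The forests (partial hierarchies) reachable by the average link algorithm:
start from singletons, and repeatedly merge two clusters of maximal average
similarity. -/
inductive AvgLinkForest [Fintype α] (w : α → α → ℝ) : Finset (HCTree α) → Prop
  | init : AvgLinkForest w (Finset.univ.image (leaf : α → HCTree α))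
  | merge {F : Finset (HCTree α)} {A B : HCTree α} :
      AvgLinkForest w F → A ∈ F → B ∈ F → A ≠ B →
      (∀ X ∈ F, ∀ Y ∈ F, X ≠ Y → sim w X.leaves Y.leaves ≤ sim w A.leaves B.leaves) →
      AvgLinkForest w (insert (node A B) ((F.erase A).erase B))

/-- `T` is produced by some execution of the average link algorithm. -/
def AvgLinkTree [Fintype α] (w : α → α → ℝ) (T : HCTree α) : Prop :=
  AvgLinkForest w {T}

end HCTree

-- AUX START
set_option linter.unusedSectionVars false
set_option linter.unusedVariables false
namespace HCTree

variable {α : Type} [DecidableEq α] [LinearOrder α]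

theorem teq_refl (t : HCTree α) : TEq t t := by
  induction t with
  | leaf a => exact TEq.leaf a
  | node l r ih1 ih2 => exact TEq.node ih1 ih2

theorem teq_trans : ∀ {a b c : HCTree α}, TEq a b → TEq b c → TEq a c := by
  intro a b c h1 h2
  induction h1 generalizing c with
  | leaf a => exact h2
  | node hl hr ihl ihr =>
    cases h2 with
    | node h2l h2r => exact TEq.node (ihl h2l) (ihr h2r)
    | swap h2l h2r => exact TEq.swap (ihl h2l) (ihr h2r)
  | swap hl hr ihl ihr =>
    cases h2 with
    | node h2l h2r => exact TEq.swap (ihl h2r) (ihr h2l)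
    | swap h2l h2r => exact TEq.node (ihl h2r) (ihr h2l)

theorem teq_leaves {s t : HCTree α} (h : TEq s t) : s.leaves = t.leaves := by
  induction h with
  | leaf a => rfl
  | node h1 h2 ih1 ih2 => simp [leaves, ih1, ih2]
  | swap h1 h2 ih1 ih2 => simp [leaves, ih1, ih2, Finset.union_comm]

theorem teq_proper {s t : HCTree α} (h : TEq s t) (hp : s.Proper) : t.Proper := by
  induction h with
  | leaf a => trivial
  | node h1 h2 ih1 ih2 =>
    obtain ⟨p1, p2, hd⟩ := hp
    refine ⟨ih1 p1, ih2 p2, ?_⟩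
    rw [← teq_leaves h1, ← teq_leaves h2]; exact hd
  | swap h1 h2 ih1 ih2 =>
    obtain ⟨p1, p2, hd⟩ := hp
    refine ⟨ih2 p2, ih1 p1, ?_⟩
    rw [← teq_leaves h2, ← teq_leaves h1]; exact hd.symm

theorem leaves_nonempty (t : HCTree α) : t.leaves.Nonempty := by
  induction t with
  | leaf a => exact ⟨a, Finset.mem_singleton_self a⟩
  | node l r ih1 ih2 => exact ih1.mono Finset.subset_union_left

variable {w : α → α → ℝ}

theorem wSet_nonneg (hnn : ∀ i j, 0 ≤ w i j) (A B : Finset α) : 0 ≤ wSet w A B := by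
  refine Finset.sum_nonneg fun i _ => Finset.sum_nonneg fun j _ => hnn i j

theorem pairsSum_nonneg (hnn : ∀ i j, 0 ≤ w i j) (L : Finset α) : 0 ≤ pairsSum w L := by
  refine Finset.sum_nonneg fun i _ => Finset.sum_nonneg fun j _ => ?_
  by_cases h : i < j <;> simp [h, hnn i j]

theorem wSet_comm (hsym : ∀ i j, w i j = w j i) (A B : Finset α) : wSet w A B = wSet w B A := by
  rw [wSet, wSet, Finset.sum_comm]
  exact Finset.sum_congr rfl fun i _ => Finset.sum_congr rfl fun j _ => hsym j i

theorem wSet_union_left {A B : Finset α} (hd : Disjoint A B) (C : Finset α) :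
    wSet w (A ∪ B) C = wSet w A C + wSet w B C := by
  rw [wSet, Finset.sum_union hd]; rfl

theorem cross_sum {f : α → α → ℝ} (hf : ∀ i j, f i j = f j i) {A B : Finset α}
    (hd : Disjoint A B) :
    ((∑ i ∈ A, ∑ j ∈ B, if i < j then f i j else 0)
      + ∑ i ∈ B, ∑ j ∈ A, if i < j then f i j else 0) = ∑ i ∈ A, ∑ j ∈ B, f i j := by
  rw [Finset.sum_comm (s := B) (t := A), ← Finset.sum_add_distrib]
  refine Finset.sum_congr rfl fun i hi => ?_
  rw [← Finset.sum_add_distrib]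
  refine Finset.sum_congr rfl fun j hj => ?_
  have hij : i ≠ j := fun h => (Finset.disjoint_left.mp hd hi) (h ▸ hj)
  rcases lt_or_gt_of_ne hij with h | h
  · simp [h, not_lt_of_gt h]
  · simp [h, not_lt_of_gt h, hf j i]

theorem pairsSum_union (hsym : ∀ i j, w i j = w j i) {A B : Finset α} (hd : Disjoint A B) :
    pairsSum w (A ∪ B) = pairsSum w A + pairsSum w B + wSet w A B := by
  unfold pairsSum
  rw [Finset.sum_union hd]
  have e1 : ∀ C : Finset α, (∑ i ∈ C, ∑ j ∈ A ∪ B, if i < j then w i j else 0)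
      = (∑ i ∈ C, ∑ j ∈ A, if i < j then w i j else 0)
        + ∑ i ∈ C, ∑ j ∈ B, if i < j then w i j else 0 := by
    intro C
    rw [← Finset.sum_add_distrib]
    exact Finset.sum_congr rfl fun i _ => Finset.sum_union hd
  rw [e1 A, e1 B]
  have := cross_sum (f := w) hsym hd
  rw [wSet]
  linarith [this]

theorem cost_eq_merge (hsym : ∀ i j, w i j = w j i) :
    ∀ {t : HCTree α}, t.Proper → cost w t = mergeCostSum w t := by
  intro t hp
  induction t with
  | leaf a => simp [cost, mergeCostSum, leaves]
  | node l r ihl ihr =>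
    obtain ⟨pl, pr, hd⟩ := hp
    have hcard : ((l.leaves ∪ r.leaves).card : ℝ)
        = (l.leaves.card : ℝ) + (r.leaves.card : ℝ) := by
      rw [Finset.card_union_of_disjoint hd]; push_cast; ring
    have meml : ∀ {i}, i ∈ l.leaves → i ∉ r.leaves := fun hi =>
      Finset.disjoint_left.mp hd hi
    have memr : ∀ {i}, i ∈ r.leaves → i ∉ l.leaves := fun hi =>
      Finset.disjoint_right.mp hd hi
    have hll : (∑ i ∈ l.leaves, ∑ j ∈ l.leaves,
        if i < j then w i j * ((node l r).lcaSize i j : ℝ) else 0) = cost w l := by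
      refine Finset.sum_congr rfl fun i hi => Finset.sum_congr rfl fun j hj => ?_
      simp [lcaSize, hi, hj]
    have hrr : (∑ i ∈ r.leaves, ∑ j ∈ r.leaves,
        if i < j then w i j * ((node l r).lcaSize i j : ℝ) else 0) = cost w r := by
      refine Finset.sum_congr rfl fun i hi => Finset.sum_congr rfl fun j hj => ?_
      simp [lcaSize, hi, hj, memr hi]
    have hlr : ∀ {i j}, i ∈ l.leaves → j ∈ r.leaves →
        ((node l r).lcaSize i j : ℝ) = ((l.leaves ∪ r.leaves).card : ℝ) := by
      intro i j hi hj
      simp [lcaSize, meml hi, memr hj]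
    have hrl : ∀ {i j}, i ∈ r.leaves → j ∈ l.leaves →
        ((node l r).lcaSize i j : ℝ) = ((l.leaves ∪ r.leaves).card : ℝ) := by
      intro i j hi hj
      simp [lcaSize, memr hi, meml hj]
    have hcross : (∑ i ∈ l.leaves, ∑ j ∈ r.leaves,
          if i < j then w i j * ((node l r).lcaSize i j : ℝ) else 0)
        + (∑ i ∈ r.leaves, ∑ j ∈ l.leaves,
          if i < j then w i j * ((node l r).lcaSize i j : ℝ) else 0)
        = ((l.leaves ∪ r.leaves).card : ℝ) * wSet w l.leaves r.leaves := by
      set c : ℝ := ((l.leaves ∪ r.leaves).card : ℝ) with hc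
      have e1 : (∑ i ∈ l.leaves, ∑ j ∈ r.leaves,
          if i < j then w i j * ((node l r).lcaSize i j : ℝ) else 0)
          = ∑ i ∈ l.leaves, ∑ j ∈ r.leaves, if i < j then w i j * c else 0 := by
        refine Finset.sum_congr rfl fun i hi => Finset.sum_congr rfl fun j hj => ?_
        rw [hlr hi hj]
      have e2 : (∑ i ∈ r.leaves, ∑ j ∈ l.leaves,
          if i < j then w i j * ((node l r).lcaSize i j : ℝ) else 0)
          = ∑ i ∈ r.leaves, ∑ j ∈ l.leaves, if i < j then w i j * c else 0 := by
        refine Finset.sum_congr rfl fun i hi => Finset.sum_congr rfl fun j hj => ?_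
        rw [hrl hi hj]
      rw [e1, e2]
      have this2 : ((∑ i ∈ l.leaves, ∑ j ∈ r.leaves, if i < j then w i j * c else 0) +
          ∑ i ∈ r.leaves, ∑ j ∈ l.leaves, if i < j then w i j * c else 0)
          = ∑ i ∈ l.leaves, ∑ j ∈ r.leaves, w i j * c :=
        cross_sum (f := fun i j => w i j * c) (fun i j => by simp [hsym i j]) hd
      rw [this2, wSet, Finset.mul_sum]
      refine Finset.sum_congr rfl fun i _ => ?_
      rw [Finset.mul_sum]
      exact Finset.sum_congr rfl fun j _ => (mul_comm _ _)
    have expand : cost w (node l r)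
        = (∑ i ∈ l.leaves, ∑ j ∈ l.leaves,
            if i < j then w i j * ((node l r).lcaSize i j : ℝ) else 0)
        + (∑ i ∈ l.leaves, ∑ j ∈ r.leaves,
            if i < j then w i j * ((node l r).lcaSize i j : ℝ) else 0)
        + ((∑ i ∈ r.leaves, ∑ j ∈ l.leaves,
            if i < j then w i j * ((node l r).lcaSize i j : ℝ) else 0)
        + (∑ i ∈ r.leaves, ∑ j ∈ r.leaves,
            if i < j then w i j * ((node l r).lcaSize i j : ℝ) else 0)) := by
      rw [cost]
      show (∑ i ∈ l.leaves ∪ r.leaves, ∑ j ∈ l.leaves ∪ r.leaves,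
        if i < j then w i j * ((node l r).lcaSize i j : ℝ) else 0) = _
      rw [Finset.sum_union hd]
      congr 1
      · rw [← Finset.sum_add_distrib]
        exact Finset.sum_congr rfl fun i _ => Finset.sum_union hd
      · rw [← Finset.sum_add_distrib]
        exact Finset.sum_congr rfl fun i _ => Finset.sum_union hd
    rw [expand]
    show _ = mergeCostSum w l + mergeCostSum w r
      + ((l.leaves.card : ℝ) + (r.leaves.card : ℝ)) * wSet w l.leaves r.leaves
    rw [hll, hrr, ihl pl, ihr pr, ← hcard]
    linarith [hcross]

theorem rev_add_cost (t : HCTree α) :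
    rev w t + cost w t = (t.leaves.card : ℝ) * pairsSum w t.leaves := by
  rw [rev, cost, pairsSum, Finset.mul_sum, ← Finset.sum_add_distrib]
  refine Finset.sum_congr rfl fun i _ => ?_
  rw [Finset.mul_sum, ← Finset.sum_add_distrib]
  refine Finset.sum_congr rfl fun j _ => ?_
  by_cases h : i < j
  · simp only [if_pos h]; ring
  · simp [h]

theorem mc_teq (hsym : ∀ i j, w i j = w j i) {s t : HCTree α} (h : TEq s t) :
    mergeCostSum w s = mergeCostSum w t := by
  induction h with
  | leaf a => rfl
  | node h1 h2 ih1 ih2 =>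
    simp only [mergeCostSum, ih1, ih2, teq_leaves h1, teq_leaves h2]
  | swap h1 h2 ih1 ih2 =>
    simp only [mergeCostSum, ih1, ih2, teq_leaves h1, teq_leaves h2]
    rw [wSet_comm hsym]; ring

theorem leaves_fill_congr {t t' : HCTree α} (h : t.leaves = t'.leaves) :
    ∀ K : Ctx α, (K.fill t).leaves = (K.fill t').leaves
  | Ctx.hole => h
  | Ctx.nodeL K r => by
    simp only [Ctx.fill, leaves, leaves_fill_congr h K]
  | Ctx.nodeR l K => by
    simp only [Ctx.fill, leaves, leaves_fill_congr h K]

theorem proper_fill_out {t : HCTree α} : ∀ K : Ctx α, (K.fill t).Proper → t.Proper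
  | Ctx.hole, h => h
  | Ctx.nodeL K r, h => proper_fill_out K h.1
  | Ctx.nodeR l K, h => proper_fill_out K h.2.1

theorem proper_fill_congr {t t' : HCTree α} (h : t.leaves = t'.leaves) (hp' : t'.Proper) :
    ∀ K : Ctx α, (K.fill t).Proper → (K.fill t').Proper
  | Ctx.hole, _ => hp'
  | Ctx.nodeL K r, hp =>
    ⟨proper_fill_congr h hp' K hp.1, hp.2.1, by
      rw [← leaves_fill_congr h K]; exact hp.2.2⟩
  | Ctx.nodeR l K, hp =>
    ⟨hp.1, proper_fill_congr h hp' K hp.2.1, by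
      rw [← leaves_fill_congr h K]; exact hp.2.2⟩

theorem mc_fill_congr {t t' : HCTree α} (h : t.leaves = t'.leaves) :
    ∀ K : Ctx α, mergeCostSum w (K.fill t) + mergeCostSum w t'
      = mergeCostSum w (K.fill t') + mergeCostSum w t
  | Ctx.hole => by simp only [Ctx.fill]; ring
  | Ctx.nodeL K r => by
    simp only [Ctx.fill, mergeCostSum]
    rw [leaves_fill_congr h K]
    have := mc_fill_congr h K
    linarith
  | Ctx.nodeR l K => by
    simp only [Ctx.fill, mergeCostSum]
    rw [leaves_fill_congr h K]
    have := mc_fill_congr h K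
    linarith

theorem teq_fill {t t' : HCTree α} (h : TEq t t') :
    ∀ K : Ctx α, TEq (K.fill t) (K.fill t')
  | Ctx.hole => h
  | Ctx.nodeL K r => TEq.node (teq_fill h K) (teq_refl r)
  | Ctx.nodeR l K => TEq.node (teq_refl l) (teq_fill h K)

def Ctx.comp : Ctx α → Ctx α → Ctx α
  | Ctx.hole, K' => K'
  | Ctx.nodeL K r, K' => Ctx.nodeL (Ctx.comp K K') r
  | Ctx.nodeR l K, K' => Ctx.nodeR l (Ctx.comp K K')

theorem Ctx.fill_comp (t : HCTree α) :
    ∀ K K' : Ctx α, (Ctx.comp K K').fill t = K.fill (K'.fill t)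
  | Ctx.hole, K' => rfl
  | Ctx.nodeL K r, K' => by simp only [Ctx.comp, Ctx.fill, Ctx.fill_comp t K K']
  | Ctx.nodeR l K, K' => by simp only [Ctx.comp, Ctx.fill, Ctx.fill_comp t K K']

theorem swap_ineq (hsym : ∀ i j, w i j = w j i)
    {T : HCTree α} (hT : T.Proper) (hopt : T.LocalOpt w)
    (K : Ctx α) (A B C : HCTree α)
    (h : TEq T (K.fill (node (node A B) C))) :
    (B.leaves.card : ℝ) * wSet w A.leaves C.leaves
      ≤ (C.leaves.card : ℝ) * wSet w A.leaves B.leaves := by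
  set t : HCTree α := node (node A B) C with ht
  set t' : HCTree α := node (node A C) B with ht'
  have hle : t.leaves = t'.leaves := by
    simp only [ht, ht', leaves]
    rw [Finset.union_right_comm]
  have hPS : (K.fill t).Proper := teq_proper h hT
  have hPt : t.Proper := proper_fill_out K hPS
  obtain ⟨⟨pA, pB, dAB⟩, pC, dABC⟩ := hPt
  have dABC' : Disjoint (A.leaves ∪ B.leaves) C.leaves := dABC
  have dAC : Disjoint A.leaves C.leaves := (Finset.disjoint_union_left.mp dABC').1
  have dBC : Disjoint B.leaves C.leaves := (Finset.disjoint_union_left.mp dABC').2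
  have hPt' : t'.Proper := ⟨⟨pA, pC, dAC⟩, pB, by
    show Disjoint (A.leaves ∪ C.leaves) B.leaves
    exact Finset.disjoint_union_left.mpr ⟨dAB, dBC.symm⟩⟩
  have hint : Interchange (K.fill t) (K.fill t') := ⟨K, A, B, C, rfl, Or.inl rfl⟩
  have h1 : rev w (K.fill t') ≤ rev w T := hopt _ _ h hint
  have hPS' : (K.fill t').Proper := proper_fill_congr hle hPt' K hPS
  have hlf : (K.fill t).leaves = (K.fill t').leaves := leaves_fill_congr hle K
  have hrevT : rev w T = rev w (K.fill t) := by
    have e1 := rev_add_cost (w := w) T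
    have e2 := rev_add_cost (w := w) (K.fill t)
    have hLT : T.leaves = (K.fill t).leaves := teq_leaves h
    have hcost : cost w T = cost w (K.fill t) := by
      rw [cost_eq_merge hsym hT, cost_eq_merge hsym hPS, mc_teq hsym h]
    rw [hLT] at e1
    linarith
  have hmc : mergeCostSum w (K.fill t) ≤ mergeCostSum w (K.fill t') := by
    have e1 := rev_add_cost (w := w) (K.fill t)
    have e2 := rev_add_cost (w := w) (K.fill t')
    rw [cost_eq_merge hsym hPS] at e1
    rw [cost_eq_merge hsym hPS'] at e2
    rw [← hlf] at e2
    rw [hrevT] at h1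
    linarith
  have hmc2 : mergeCostSum w t ≤ mergeCostSum w t' := by
    have := mc_fill_congr (w := w) hle K
    linarith
  have cAB : (((node A B).leaves).card : ℝ)
      = (A.leaves.card : ℝ) + (B.leaves.card : ℝ) := by
    show (((A.leaves ∪ B.leaves)).card : ℝ) = _
    rw [Finset.card_union_of_disjoint dAB]; push_cast; ring
  have cAC : (((node A C).leaves).card : ℝ)
      = (A.leaves.card : ℝ) + (C.leaves.card : ℝ) := by
    show (((A.leaves ∪ C.leaves)).card : ℝ) = _
    rw [Finset.card_union_of_disjoint dAC]; push_cast; ring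
  have wABC : wSet w (node A B).leaves C.leaves
      = wSet w A.leaves C.leaves + wSet w B.leaves C.leaves := wSet_union_left dAB _
  have wACB : wSet w (node A C).leaves B.leaves
      = wSet w A.leaves B.leaves + wSet w C.leaves B.leaves := wSet_union_left dAC _
  have wCB : wSet w C.leaves B.leaves = wSet w B.leaves C.leaves := wSet_comm hsym _ _
  simp only [ht, ht', mergeCostSum, cAB, cAC, wABC, wACB, wCB] at hmc2
  linarith

theorem swap_ineq2 (hsym : ∀ i j, w i j = w j i)
    {T : HCTree α} (hT : T.Proper) (hopt : T.LocalOpt w)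
    (K : Ctx α) (A B C : HCTree α)
    (h : TEq T (K.fill (node (node A B) C))) :
    (A.leaves.card : ℝ) * wSet w B.leaves C.leaves
      ≤ (C.leaves.card : ℝ) * wSet w A.leaves B.leaves := by
  have h2 : TEq T (K.fill (node (node B A) C)) :=
    teq_trans h (teq_fill (TEq.node (TEq.swap (teq_refl A) (teq_refl B)) (teq_refl C)) K)
  have h3 := swap_ineq hsym hT hopt K B A C h2
  rw [wSet_comm hsym B.leaves A.leaves] at h3
  exact h3

theorem lemW (hsym : ∀ i j, w i j = w j i) (hnn : ∀ i j, 0 ≤ w i j)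
    {T : HCTree α} (hT : T.Proper) (hopt : T.LocalOpt w) :
    ∀ (X : HCTree α) (K : Ctx α) (Y : HCTree α), TEq T (K.fill (node X Y)) →
      ((X.leaves.card : ℝ) - 1) * wSet w X.leaves Y.leaves
        ≤ 2 * (Y.leaves.card : ℝ) * pairsSum w X.leaves := by
  intro X
  induction X with
  | leaf a =>
    intro K Y h
    have h1 : (((leaf a : HCTree α).leaves).card : ℝ) - 1 = 0 := by
      simp [leaves]
    rw [h1, zero_mul]
    exact mul_nonneg (by positivity) (pairsSum_nonneg hnn _)
  | node A B ihA ihB =>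
    intro K Y h
    have c1 := swap_ineq hsym hT hopt K A B Y h
    have c2 := swap_ineq2 hsym hT hopt K A B Y h
    have hfill : ∀ Z : HCTree α,
        (Ctx.comp K (Ctx.nodeL Ctx.hole Y)).fill Z = K.fill (node Z Y) := by
      intro Z; rw [Ctx.fill_comp]; rfl
    have hA : TEq T ((Ctx.comp K (Ctx.nodeL Ctx.hole Y)).fill (node A B)) := by
      rw [hfill]; exact h
    have iA := ihA _ B hA
    have hB : TEq T ((Ctx.comp K (Ctx.nodeL Ctx.hole Y)).fill (node B A)) := by
      rw [hfill]
      exact teq_trans h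
        (teq_fill (TEq.node (TEq.swap (teq_refl A) (teq_refl B)) (teq_refl Y)) K)
    have iB := ihB _ A hB
    rw [wSet_comm hsym B.leaves A.leaves] at iB
    have hPt : (node (node A B) Y).Proper := proper_fill_out K (teq_proper h hT)
    obtain ⟨⟨pA, pB, dAB⟩, pY, dABY⟩ := hPt
    set p : ℝ := (A.leaves.card : ℝ) with hp
    set q : ℝ := (B.leaves.card : ℝ) with hq
    set c : ℝ := (Y.leaves.card : ℝ) with hc
    set wAB : ℝ := wSet w A.leaves B.leaves with hwAB
    set wAY : ℝ := wSet w A.leaves Y.leaves with hwAY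
    set wBY : ℝ := wSet w B.leaves Y.leaves with hwBY
    set psA : ℝ := pairsSum w A.leaves with hpsA
    set psB : ℝ := pairsSum w B.leaves with hpsB
    have hcard : (((node A B).leaves).card : ℝ) = p + q := by
      show (((A.leaves ∪ B.leaves)).card : ℝ) = _
      rw [Finset.card_union_of_disjoint dAB]; push_cast; ring
    have hw : wSet w (node A B).leaves Y.leaves = wAY + wBY := wSet_union_left dAB _
    have hps : pairsSum w (node A B).leaves = psA + psB + wAB := pairsSum_union hsym dAB
    rw [hcard, hw, hps]
    have hp1 : (1:ℝ) ≤ p := by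
      rw [hp]; exact_mod_cast Finset.card_pos.mpr (leaves_nonempty A)
    have hq1 : (1:ℝ) ≤ q := by
      rw [hq]; exact_mod_cast Finset.card_pos.mpr (leaves_nonempty B)
    have hc0 : (0:ℝ) ≤ c := by rw [hc]; positivity
    have key : p * q * ((p + q - 1) * (wAY + wBY)) ≤ p * q * (2 * c * (psA + psB + wAB)) := by
      have m1 := mul_le_mul_of_nonneg_left c1
        (mul_nonneg (show (0:ℝ) ≤ p by linarith) (show (0:ℝ) ≤ p + q - 1 by linarith))
      have m2 := mul_le_mul_of_nonneg_left c2
        (mul_nonneg (show (0:ℝ) ≤ q by linarith) (show (0:ℝ) ≤ p + q - 1 by linarith))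
      have m3 := mul_le_mul_of_nonneg_left iA
        (mul_nonneg hc0 (show (0:ℝ) ≤ p by linarith))
      have m4 := mul_le_mul_of_nonneg_left iB
        (mul_nonneg hc0 (show (0:ℝ) ≤ q by linarith))
      linarith [m1, m2, m3, m4]
    have hpq : (0:ℝ) < p * q :=
      mul_pos (show (0:ℝ) < p by linarith) (show (0:ℝ) < q by linarith)
    exact le_of_mul_le_mul_left key hpq

theorem main_ineq (hsym : ∀ i j, w i j = w j i) (hnn : ∀ i j, 0 ≤ w i j)
    {T : HCTree α} (hT : T.Proper) (hopt : T.LocalOpt w) :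
    ∀ (S : HCTree α) (K : Ctx α), TEq T (K.fill S) →
      3 * mergeCostSum w S ≤ 2 * ((S.leaves.card : ℝ) + 1) * pairsSum w S.leaves := by
  intro S
  induction S with
  | leaf a =>
    intro K h
    simp only [mergeCostSum]
    have h1 := pairsSum_nonneg (w := w) hnn (leaf a : HCTree α).leaves
    have h2 : (0:ℝ) ≤ (((leaf a : HCTree α).leaves).card : ℝ) + 1 := by positivity
    nlinarith
  | node l r ihl ihr =>
    intro K h
    have hKl : TEq T ((Ctx.comp K (Ctx.nodeL Ctx.hole r)).fill l) := by
      rw [Ctx.fill_comp]; exact h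
    have hKr : TEq T ((Ctx.comp K (Ctx.nodeR l Ctx.hole)).fill r) := by
      rw [Ctx.fill_comp]; exact h
    have il := ihl _ hKl
    have ir := ihr _ hKr
    have W1 := lemW hsym hnn hT hopt l K r h
    have hswap : TEq T (K.fill (node r l)) :=
      teq_trans h (teq_fill (TEq.swap (teq_refl l) (teq_refl r)) K)
    have W2 := lemW hsym hnn hT hopt r K l hswap
    rw [wSet_comm hsym r.leaves l.leaves] at W2
    have hPt : (node l r).Proper := proper_fill_out K (teq_proper h hT)
    obtain ⟨pl, pr, dlr⟩ := hPt
    have hcard : (((node l r).leaves).card : ℝ) = (l.leaves.card : ℝ) + (r.leaves.card : ℝ) := by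
      show (((l.leaves ∪ r.leaves)).card : ℝ) = _
      rw [Finset.card_union_of_disjoint dlr]; push_cast; ring
    have hps : pairsSum w (node l r).leaves
        = pairsSum w l.leaves + pairsSum w r.leaves + wSet w l.leaves r.leaves :=
      pairsSum_union hsym dlr
    have hmc : mergeCostSum w (node l r) = mergeCostSum w l + mergeCostSum w r
        + ((l.leaves.card : ℝ) + (r.leaves.card : ℝ)) * wSet w l.leaves r.leaves := rfl
    rw [hmc, hcard, hps]
    linarith [il, ir, W1, W2]

end HCTree

-- AUX END

open HCTree in
/-- for a locally optimal tree, `2·rev(T) + 2·s(T) ≥ cost(T)`,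
where `s(T) = Σ_{i<j} w(i,j)`. -/
theorem locally_optimal_two_rev_add_two_s_ge_cost {n : ℕ} (w : Fin n → Fin n → ℝ)
    (hsym : ∀ i j, w i j = w j i) (hnonneg : ∀ i j, 0 ≤ w i j)
    (T : HCTree (Fin n)) (hproper : T.Proper) (horder : T.leaves = Finset.univ)
    (hopt : T.LocalOpt w) :
    2 * T.rev w + 2 * (∑ i : Fin n, ∑ j : Fin n, if i < j then w i j else 0) ≥ T.cost w := by
  have hmain := main_ineq hsym hnonneg hproper hopt T Ctx.hole (teq_refl T)
  have hrc := rev_add_cost (w := w) T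
  have hcost := cost_eq_merge hsym hproper
  have hcardT : ((T.leaves).card : ℝ) = (n : ℝ) := by rw [horder]; simp
  have hs : pairsSum w T.leaves = ∑ i : Fin n, ∑ j : Fin n, if i < j then w i j else 0 := by
    rw [horder]; rfl
  rw [ge_iff_le, ← hs]
  rw [hcardT] at hrc hmain
  linarith
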